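/- For every graph G on n ≥ 2 vertices, μ₂(G) + μ₂(Ḡ) < (√2/2)·n, where μ₂ denotes the second largest adjacency eigenvalue. -/

import Mathlib

/-
Let A and B be the adjacency matrices of G and Gᶜ, so that A + B = J - I. Some unit vector z in the
span of the top two eigenvectors of B is orthogonal to the all-ones vector, hence
μ₂(Gᶜ) ≤ zᵀBz = -1 - zᵀAz ≤ -1 - μₙ(G).
On the other hand ∑ μᵢ² = tr A² = 2m and μ₁ ≥ 2m/n (Rayleigh quotient of the all-ones vector), so
μ₂² + μₙ² ≤ 2m - (2m/n)² ≤ n²/4 and therefore μ₂(G) - μₙ(G) ≤ n/√2.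
Adding the two bounds gives μ₂(G) + μ₂(Gᶜ) ≤ n/√2 - 1.
-/

open Matrix SimpleGraph

/-- The eigenvalues of the adjacency matrix of `G`, in descending order:
`graphEig G i` is the `(i+1)`-th largest eigenvalue. -/
noncomputable def graphEig {n : ℕ} (G : SimpleGraph (Fin n)) (i : Fin n) : ℝ :=
  letI := Classical.decRel G.Adj
  letI hH : (G.adjMatrix ℝ).IsHermitian := by rw [Matrix.IsHermitian, conjTranspose_eq_transpose_of_trivial]; exact G.isSymm_adjMatrix
  hH.eigenvalues (Tuple.sort hH.eigenvalues i.rev)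

lemma exists_sq_add_sq_eq_one_and_mul_add_mul_eq_zero (a b : ℝ) :
    ∃ α β : ℝ, α ^ 2 + β ^ 2 = 1 ∧ α * a + β * b = 0 := by
  by_cases hab : a = 0 ∧ b = 0
  · exact ⟨1, 0, by norm_num, by simp [hab.1]⟩
  have hr : 0 < a ^ 2 + b ^ 2 := by
    rcases not_and_or.mp hab with h | h <;> positivity
  set r := Real.sqrt (a ^ 2 + b ^ 2)
  have hr0 : r ≠ 0 := (Real.sqrt_pos.mpr hr).ne'
  refine ⟨b / r, -a / r, ?_, by field_simp; ring⟩
  field_simp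
  rw [Real.sq_sqrt hr.le]
  ring

namespace Matrix.IsHermitian

section Expansion

variable {ι : Type*} [Fintype ι] [DecidableEq ι] {A : Matrix ι ι ℝ} (hA : A.IsHermitian)

lemma eigenvectorBasis_dotProduct_eigenvectorBasis (i j : ι) :
    ⇑(hA.eigenvectorBasis i) ⬝ᵥ ⇑(hA.eigenvectorBasis j) = if i = j then 1 else 0 := by
  simpa [PiLp.inner_apply, dotProduct, mul_comm] using
    orthonormal_iff_ite.mp hA.eigenvectorBasis.orthonormal i j

lemma eigenvectorBasis_dotProduct_mulVec (i : ι) (x : ι → ℝ) :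
    ⇑(hA.eigenvectorBasis i) ⬝ᵥ (A *ᵥ x) = hA.eigenvalues i * (⇑(hA.eigenvectorBasis i) ⬝ᵥ x) := by
  rw [dotProduct_mulVec, ← mulVec_transpose, ← conjTranspose_eq_transpose_of_trivial, hA.eq,
    hA.mulVec_eigenvectorBasis, smul_dotProduct, smul_eq_mul]

lemma sum_dotProduct_eigenvectorBasis_mul (x y : ι → ℝ) :
    ∑ i, (x ⬝ᵥ ⇑(hA.eigenvectorBasis i)) * (⇑(hA.eigenvectorBasis i) ⬝ᵥ y) = x ⬝ᵥ y := by
  simpa [PiLp.inner_apply, dotProduct, mul_comm] using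
    hA.eigenvectorBasis.sum_inner_mul_inner (WithLp.toLp 2 x) (WithLp.toLp 2 y)

lemma dotProduct_self_eq_sum (x : ι → ℝ) :
    x ⬝ᵥ x = ∑ i, (⇑(hA.eigenvectorBasis i) ⬝ᵥ x) ^ 2 := by
  rw [← hA.sum_dotProduct_eigenvectorBasis_mul x x]
  simp_rw [dotProduct_comm x, sq]

lemma dotProduct_mulVec_self_eq_sum (x : ι → ℝ) :
    x ⬝ᵥ (A *ᵥ x) = ∑ i, hA.eigenvalues i * (⇑(hA.eigenvectorBasis i) ⬝ᵥ x) ^ 2 := by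
  rw [← hA.sum_dotProduct_eigenvectorBasis_mul x (A *ᵥ x)]
  refine Finset.sum_congr rfl fun i _ => ?_
  rw [eigenvectorBasis_dotProduct_mulVec, dotProduct_comm x]
  ring

lemma mul_dotProduct_self_le_dotProduct_mulVec {c : ℝ} (hc : ∀ i, c ≤ hA.eigenvalues i)
    (x : ι → ℝ) : c * (x ⬝ᵥ x) ≤ x ⬝ᵥ (A *ᵥ x) := by
  rw [hA.dotProduct_mulVec_self_eq_sum, hA.dotProduct_self_eq_sum, Finset.mul_sum]
  exact Finset.sum_le_sum fun i _ => mul_le_mul_of_nonneg_right (hc i) (sq_nonneg _)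

lemma dotProduct_mulVec_le_mul_dotProduct_self {c : ℝ} (hc : ∀ i, hA.eigenvalues i ≤ c)
    (x : ι → ℝ) : x ⬝ᵥ (A *ᵥ x) ≤ c * (x ⬝ᵥ x) := by
  rw [hA.dotProduct_mulVec_self_eq_sum, hA.dotProduct_self_eq_sum, Finset.mul_sum]
  exact Finset.sum_le_sum fun i _ => mul_le_mul_of_nonneg_right (hc i) (sq_nonneg _)

lemma sum_eigenvalues_sq : ∑ i, hA.eigenvalues i ^ 2 = ∑ i, ∑ j, A i j ^ 2 := by
  set D : Matrix ι ι ℝ := diagonal (RCLike.ofReal ∘ hA.eigenvalues)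
  have trace_mul_self : (A * A).trace = ∑ i, ∑ j, A i j ^ 2 := by
    refine Finset.sum_congr rfl fun i _ => Finset.sum_congr rfl fun j _ => ?_
    show A i j * A j i = A i j ^ 2
    rw [← hA.apply i j, star_trivial, sq]
  have trace_diag : (A * A).trace = (D * D).trace := by
    conv_lhs => rw [hA.spectral_theorem, ← map_mul, Unitary.conjStarAlgAut_apply,
      trace_mul_cycle, Unitary.coe_star_mul_self, one_mul]
  rw [← trace_mul_self, trace_diag, diagonal_mul_diagonal, trace_diagonal]
  simp [sq]

end Expansion

section Sorted

variable {n : ℕ} {A : Matrix (Fin n) (Fin n) ℝ} (hA : A.IsHermitian)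

noncomputable def sortedEigenvalues (i : Fin n) : ℝ :=
  hA.eigenvalues (Tuple.sort hA.eigenvalues i.rev)

lemma sortedEigenvalues_antitone : Antitone hA.sortedEigenvalues := fun _ _ h =>
  Tuple.monotone_sort hA.eigenvalues (Fin.rev_le_rev.mpr h)

lemma sortedEigenvalues_rev_symm_sort (j : Fin n) :
    hA.sortedEigenvalues ((Tuple.sort hA.eigenvalues).symm j).rev = hA.eigenvalues j := by
  simp [sortedEigenvalues]

lemma eigenvalues_le_sortedEigenvalues_zero (j : Fin n) :
    hA.eigenvalues j ≤ hA.sortedEigenvalues ⟨0, j.pos⟩ := by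
  rw [← hA.sortedEigenvalues_rev_symm_sort j]
  exact hA.sortedEigenvalues_antitone (Fin.le_def.mpr (Nat.zero_le _))

lemma sortedEigenvalues_last_le_eigenvalues (j : Fin n) :
    hA.sortedEigenvalues ⟨n - 1, by have := j.pos; omega⟩ ≤ hA.eigenvalues j := by
  rw [← hA.sortedEigenvalues_rev_symm_sort j]
  exact hA.sortedEigenvalues_antitone (Fin.le_def.mpr (by have := j.isLt; simp; omega))

lemma sum_sortedEigenvalues_sq : ∑ i, hA.sortedEigenvalues i ^ 2 = ∑ i, hA.eigenvalues i ^ 2 :=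
  (Fin.revPerm.trans (Tuple.sort hA.eigenvalues)).sum_comp (hA.eigenvalues · ^ 2)

lemma exists_dotProduct_eq_zero_sortedEigenvalues_one_le (hn : 2 ≤ n) (c : Fin n → ℝ) :
    ∃ z : Fin n → ℝ, z ⬝ᵥ z = 1 ∧ c ⬝ᵥ z = 0 ∧
      hA.sortedEigenvalues ⟨1, hn⟩ ≤ z ⬝ᵥ (A *ᵥ z) := by
  set σ := Tuple.sort hA.eigenvalues
  set a := σ (Fin.rev ⟨0, by omega⟩)
  set b := σ (Fin.rev ⟨1, by omega⟩)
  have hab : a ≠ b := fun h => by simpa using Fin.rev_injective (σ.injective h)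
  have hle : hA.eigenvalues b ≤ hA.eigenvalues a :=
    hA.sortedEigenvalues_antitone (Fin.le_def.mpr zero_le_one)
  set v := fun i => ⇑(hA.eigenvectorBasis i)
  have hv : ∀ i j, v i ⬝ᵥ v j = if i = j then 1 else 0 :=
    hA.eigenvectorBasis_dotProduct_eigenvectorBasis
  obtain ⟨α, β, hαβ, hc⟩ := exists_sq_add_sq_eq_one_and_mul_add_mul_eq_zero (c ⬝ᵥ v a) (c ⬝ᵥ v b)
  refine ⟨α • v a + β • v b, ?_, ?_, ?_⟩
  · simp only [add_dotProduct, dotProduct_add, smul_dotProduct, dotProduct_smul, hv, smul_eq_mul,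
      if_neg hab, if_neg hab.symm, ↓reduceIte, mul_one, mul_zero, add_zero, zero_add]
    linear_combination hαβ
  · simpa only [dotProduct_add, dotProduct_smul, smul_eq_mul, mul_comm] using hc
  · have hAz : A *ᵥ (α • v a + β • v b) =
        (α * hA.eigenvalues a) • v a + (β * hA.eigenvalues b) • v b := by
      simp only [mulVec_add, mulVec_smul, v, hA.mulVec_eigenvectorBasis, smul_smul]
    rw [hAz]
    simp only [add_dotProduct, dotProduct_add, smul_dotProduct, dotProduct_smul, hv, smul_eq_mul,
      if_neg hab, if_neg hab.symm, ↓reduceIte, mul_one, mul_zero, add_zero, zero_add]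
    show hA.eigenvalues b ≤ _
    linear_combination mul_le_mul_of_nonneg_right hle (sq_nonneg α) - hA.eigenvalues b * hαβ

lemma sortedEigenvalues_one_add_sortedEigenvalues_last_le {B : Matrix (Fin n) (Fin n) ℝ}
    (hB : B.IsHermitian) (hn : 2 ≤ n) (hAB : A + B = of 1 - 1) :
    hB.sortedEigenvalues ⟨1, hn⟩ + hA.sortedEigenvalues ⟨n - 1, by omega⟩ ≤ -1 := by
  obtain ⟨z, hzz, hz1, hBz⟩ := hB.exists_dotProduct_eq_zero_sortedEigenvalues_one_le hn 1
  have hJz : (of 1 : Matrix (Fin n) (Fin n) ℝ) *ᵥ z = 0 := by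
    ext i
    simpa [mulVec, dotProduct] using hz1
  have hB_eq : z ⬝ᵥ (B *ᵥ z) = -1 - z ⬝ᵥ (A *ᵥ z) := by
    rw [eq_sub_of_add_eq' hAB, sub_mulVec, sub_mulVec, hJz, one_mulVec, dotProduct_sub,
      dotProduct_sub, dotProduct_zero, hzz, zero_sub]
  have hAz := hA.mul_dotProduct_self_le_dotProduct_mulVec
    (c := hA.sortedEigenvalues ⟨n - 1, by omega⟩) hA.sortedEigenvalues_last_le_eigenvalues z
  rw [hzz, mul_one] at hAz
  linarith

lemma sum_sum_le_sortedEigenvalues_zero_mul (hn : 0 < n) :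
    ∑ i, ∑ j, A i j ≤ hA.sortedEigenvalues ⟨0, hn⟩ * n := by
  have h := hA.dotProduct_mulVec_le_mul_dotProduct_self
    (c := hA.sortedEigenvalues ⟨0, hn⟩) hA.eigenvalues_le_sortedEigenvalues_zero 1
  simpa [dotProduct, mulVec] using h

lemma sq_sortedEigenvalues_add_sq_add_sq_le (hn : 3 ≤ n) :
    hA.sortedEigenvalues ⟨0, by omega⟩ ^ 2 + hA.sortedEigenvalues ⟨1, by omega⟩ ^ 2 +
      hA.sortedEigenvalues ⟨n - 1, by omega⟩ ^ 2 ≤ ∑ i, ∑ j, A i j ^ 2 := by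
  rw [← hA.sum_eigenvalues_sq, ← hA.sum_sortedEigenvalues_sq]
  have h := Finset.sum_le_sum_of_subset_of_nonneg
    (Finset.subset_univ {⟨0, by omega⟩, ⟨1, by omega⟩, ⟨n - 1, by omega⟩})
    (fun i _ _ => sq_nonneg (hA.sortedEigenvalues i))
  rwa [Finset.sum_insert (by simp [Fin.ext_iff]; omega),
    Finset.sum_pair (by simp [Fin.ext_iff]; omega), ← add_assoc] at h

end Sorted

end Matrix.IsHermitian

namespace SimpleGraph

variable {n : ℕ} (G : SimpleGraph (Fin n)) [DecidableRel G.Adj]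

lemma sq_sortedEigenvalues_one_add_sq_sortedEigenvalues_last_le (hn : 3 ≤ n) :
    (G.isHermitian_adjMatrix ℝ).sortedEigenvalues ⟨1, by omega⟩ ^ 2 +
      (G.isHermitian_adjMatrix ℝ).sortedEigenvalues ⟨n - 1, by omega⟩ ^ 2 ≤ (n : ℝ) ^ 2 / 4 := by
  set hA := G.isHermitian_adjMatrix ℝ
  set T := ∑ i, ∑ j, G.adjMatrix ℝ i j
  have hsq : ∑ i, ∑ j, G.adjMatrix ℝ i j ^ 2 = T := by
    simp only [T, adjMatrix_apply, ite_pow, one_pow, zero_pow two_ne_zero]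
  have hT : 0 ≤ T := hsq ▸ by positivity
  have h₁ := hA.sum_sum_le_sortedEigenvalues_zero_mul (by omega)
  have h₃ := hA.sq_sortedEigenvalues_add_sq_add_sq_le hn
  rw [hsq] at h₃
  have hT_sq : T ^ 2 ≤ (hA.sortedEigenvalues ⟨0, by omega⟩ * n) ^ 2 := pow_le_pow_left₀ hT h₁ 2
  have key : (n : ℝ) ^ 2 * (hA.sortedEigenvalues ⟨1, by omega⟩ ^ 2 +
      hA.sortedEigenvalues ⟨n - 1, by omega⟩ ^ 2) ≤ (n : ℝ) ^ 2 * T - T ^ 2 := by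
    nlinarith
  have hn4 : (n : ℝ) ^ 2 * T - T ^ 2 ≤ (n : ℝ) ^ 2 * ((n : ℝ) ^ 2 / 4) := by
    nlinarith [sq_nonneg (2 * T - (n : ℝ) ^ 2)]
  exact le_of_mul_le_mul_left (key.trans hn4) (by positivity)

lemma sortedEigenvalues_one_sub_sortedEigenvalues_last_le (hn : 2 ≤ n) :
    (G.isHermitian_adjMatrix ℝ).sortedEigenvalues ⟨1, hn⟩ -
      (G.isHermitian_adjMatrix ℝ).sortedEigenvalues ⟨n - 1, by omega⟩ ≤ √2 / 2 * n := by
  rcases hn.eq_or_lt with rfl | hn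
  · simp only [sub_self]
    positivity
  have h := G.sq_sortedEigenvalues_one_add_sq_sortedEigenvalues_last_le hn
  have hsqrt : (√2 / 2 * n) ^ 2 = (n : ℝ) ^ 2 / 2 := by
    rw [mul_pow, div_pow, Real.sq_sqrt zero_le_two]
    ring
  refine abs_le_of_sq_le_sq' ?_ (by positivity) |>.2
  nlinarith [sq_nonneg ((G.isHermitian_adjMatrix ℝ).sortedEigenvalues ⟨1, by omega⟩ +
      (G.isHermitian_adjMatrix ℝ).sortedEigenvalues ⟨n - 1, by omega⟩)]

end SimpleGraph

theorem stmt9 (n : ℕ) (hn : 2 ≤ n) (G : SimpleGraph (Fin n)) :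
    graphEig G ⟨1, by omega⟩ + graphEig Gᶜ ⟨1, by omega⟩ < Real.sqrt 2 / 2 * n := by
  let := Classical.decRel G.Adj
  let := Classical.decRel Gᶜ.Adj
  have hsum : G.adjMatrix ℝ + Gᶜ.adjMatrix ℝ = of 1 - 1 := by
    rw [isCompl_compl.adjMatrix_add_adjMatrix_eq_adjMatrix_completeGraph ℝ,
      adjMatrix_completeGraph_eq_of_one_sub_one]
  have hcompl := (G.isHermitian_adjMatrix ℝ).sortedEigenvalues_one_add_sortedEigenvalues_last_le
    (Gᶜ.isHermitian_adjMatrix ℝ) hn hsum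
  have hgap := G.sortedEigenvalues_one_sub_sortedEigenvalues_last_le hn
  change (G.isHermitian_adjMatrix ℝ).sortedEigenvalues _ +
    (Gᶜ.isHermitian_adjMatrix ℝ).sortedEigenvalues _ < _
  linarith
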